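/- arXiv:1005.0005 — 4 statements merged into one kernel-verified Lean document; each statement's English description precedes it below -/
import Mathlib

section
/- Let d ≥ 1, let w = (1,1,…,1)ᵀ/√d ∈ ℝ^d, let Q = -k·I for some real k, and define P = α(I - wwᵀ) + α(1-d)wwᵀ with α ≥ k. Then every diagonal entry of P is zero and (I - wwᵀ)(Q + P)(I - wwᵀ) = (α - k)(I - wwᵀ), which is positive semidefinite. -/
open Matrix Real

/-! Since `w` is a unit vector, `E = wwᵀ` is a symmetric idempotent, hence so is `I - E`. Then
`(I - E) E = 0` kills the `E`-part of `Q + P` under the sandwich, and a symmetric idempotent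
`I - E = (I - E)ᴴ (I - E)` is positive semidefinite. -/

theorem IsIdempotentElem.one_sub_mul_smul_add_mul_one_sub {R A : Type*} [CommRing R] [Ring A]
    [Algebra R A] {e : A} (he : IsIdempotentElem e) (k α β : R) :
    (1 - e) * ((-k) • 1 + (α • (1 - e) + β • e)) * (1 - e) = (α - k) • (1 - e) := by
  have hproj : (1 - e) * (1 - e) = 1 - e := he.one_sub.eq
  have hkill : (1 - e) * e * (1 - e) = 0 := by rw [he.one_sub_mul_self, zero_mul]
  simp only [mul_add, add_mul, mul_smul_comm, smul_mul_assoc, mul_one, hproj, hkill, smul_zero]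
  module

namespace Matrix

variable {n R : Type*} [Fintype n]

theorem isIdempotentElem_vecMulVec [CommSemiring R] {u v : n → R} (h : v ⬝ᵥ u = 1) :
    IsIdempotentElem (vecMulVec u v) := by
  rw [IsIdempotentElem, vecMulVec_mul_vecMulVec, h, one_smul]

theorem IsHermitian.posSemidef_of_isIdempotentElem [Ring R] [PartialOrder R] [StarRing R]
    [StarOrderedRing R] {A : Matrix n n R} (hA : A.IsHermitian) (hA' : IsIdempotentElem A) :
    A.PosSemidef := by
  simpa only [hA.eq, hA'.eq] using posSemidef_conjTranspose_mul_self A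

end Matrix

/-- With `w = (1,…,1)ᵀ/√d`, `Q = -k·I`, and
`P = α(I - wwᵀ) + α(1-d)wwᵀ` for `α ≥ k`, every diagonal entry of `P` is zero and
`(I - wwᵀ)(Q + P)(I - wwᵀ) = (α - k)(I - wwᵀ)`, which is positive semidefinite. -/
theorem stmt0 (d : ℕ) (hd : 1 ≤ d) (k α : ℝ) (hαk : k ≤ α)
    (w : Fin d → ℝ) (hw : w = fun _ => 1 / Real.sqrt d) :
    let wwT : Matrix (Fin d) (Fin d) ℝ := vecMulVec w w
    let Q : Matrix (Fin d) (Fin d) ℝ := (-k) • (1 : Matrix (Fin d) (Fin d) ℝ)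
    let P : Matrix (Fin d) (Fin d) ℝ := α • ((1 : Matrix (Fin d) (Fin d) ℝ) - wwT)
      + (α * (1 - (d : ℝ))) • wwT
    (∀ i, P i i = 0) ∧
    ((1 - wwT) * (Q + P) * (1 - wwT) = (α - k) • (1 - wwT)) ∧
    ((α - k) • ((1 : Matrix (Fin d) (Fin d) ℝ) - wwT)).PosSemidef := by
  intro wwT Q P
  have hd0 : (0 : ℝ) < d := by exact_mod_cast hd
  have hwi : ∀ i, w i * w i = 1 / d := fun i => by
    rw [hw, div_mul_div_comm, one_mul, mul_self_sqrt hd0.le]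
  have hunit : w ⬝ᵥ w = 1 := by
    simp only [dotProduct, hwi, Finset.sum_const, Finset.card_univ, Fintype.card_fin, nsmul_eq_mul]
    field_simp
  have hE : IsIdempotentElem wwT := isIdempotentElem_vecMulVec hunit
  have hherm : wwT.IsHermitian := by
    simpa only [star_trivial] using (posSemidef_vecMulVec_self_star w).isHermitian
  refine ⟨fun i => ?_, hE.one_sub_mul_smul_add_mul_one_sub k α _, ?_⟩
  · simp only [P, wwT, Matrix.add_apply, Matrix.smul_apply, Matrix.sub_apply, one_apply_eq,
      vecMulVec_apply, hwi, smul_eq_mul]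
    field_simp
    ring
  · exact ((isHermitian_one.sub hherm).posSemidef_of_isIdempotentElem hE.one_sub).smul
      (sub_nonneg.2 hαk)
end

section
/- Let L = 2π ∑_{i,j} Q_{ij}|i,i⟩⟨j,j| + 2π ∑_{i≠j} P_{ij}|i,j⟩⟨i,j| with Q, P real, and let ω be the projector onto |ω⟩ = (1/√d)∑_i|i,i⟩. Then the conditional complete positivity condition (I-ω)L^Γ(I-ω) ≥ 0 holds if and only if (a) Q_{ij} ≥ 0 for all i ≠ j, and (b) (I - wwᵀ)M(I - wwᵀ) ≥ 0, where M is the d×d matrix with M_{ii} = Q_{ii} and M_{ij} = P_{ij} for i ≠ j, and w = (1,…,1)ᵀ/√d. -/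
/-!
Let `J : ℂ^d → ℂ^d ⊗ ℂ^d`, `e_i ↦ |i,i⟩`, be the isometric embedding of the diagonal. Then
`L^Γ = 2π (D + J M Jᴴ)`, where `D` is diagonal with entry `Q_{ij}` at `|i,j⟩` for `i ≠ j` and `0`
at `|i,i⟩`, and `ω = J wwᵀ Jᴴ`. As `D` vanishes on the range of `J`, compressing by `I - ω` only
affects the second summand: `(I-ω)L^Γ(I-ω) = 2π (D + J (I-wwᵀ)M(I-wwᵀ) Jᴴ)`. This is an orthogonal
direct sum of `D` and `(I-wwᵀ)M(I-wwᵀ)`, hence positive semidefinite iff both summands are.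
-/

open Matrix Real ComplexOrder

/-- The involution `Γ` on matrix units: `(|i,j⟩⟨k,l|)^Γ = |i,k⟩⟨j,l|`. -/
def gammaOp (d : ℕ) (M : Matrix (Fin d × Fin d) (Fin d × Fin d) ℂ) :
    Matrix (Fin d × Fin d) (Fin d × Fin d) ℂ :=
  Matrix.of fun p q => M (p.1, q.1) (p.2, q.2)

section Compression

variable {m n R : Type*} [Fintype m] [Fintype n] [DecidableEq m] [DecidableEq n]
  [CommRing R] [StarRing R]

lemma one_sub_conj_mul_add_conj_mul_one_sub_conj {D : Matrix m m R} {J : Matrix m n R}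
    (W N : Matrix n n R) (hD : D.IsHermitian) (hJ : Jᴴ * J = 1) (hDJ : Jᴴ * D = 0) :
    (1 - J * W * Jᴴ) * (D + J * N * Jᴴ) * (1 - J * W * Jᴴ) =
      D + J * ((1 - W) * N * (1 - W)) * Jᴴ := by
  have hJD : D * J = 0 := by simpa [hD.eq] using congrArg conjTranspose hDJ
  have hl : (1 - J * W * Jᴴ) * D = D := by
    rw [Matrix.sub_mul, Matrix.one_mul, Matrix.mul_assoc, hDJ, Matrix.mul_zero, sub_zero]
  have hr : D * (1 - J * W * Jᴴ) = D := by
    rw [Matrix.mul_sub, Matrix.mul_one, ← Matrix.mul_assoc, ← Matrix.mul_assoc, hJD,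
      Matrix.zero_mul, Matrix.zero_mul, sub_zero]
  have hlJ : (1 - J * W * Jᴴ) * J = J * (1 - W) := by
    rw [Matrix.sub_mul, Matrix.one_mul, Matrix.mul_assoc, hJ, Matrix.mul_one, Matrix.mul_sub,
      Matrix.mul_one]
  have hrJ : Jᴴ * (1 - J * W * Jᴴ) = (1 - W) * Jᴴ := by
    rw [Matrix.mul_sub, Matrix.mul_one, ← Matrix.mul_assoc, ← Matrix.mul_assoc, hJ,
      Matrix.one_mul, Matrix.sub_mul, Matrix.one_mul]
  calc _ = (1 - J * W * Jᴴ) * D * (1 - J * W * Jᴴ)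
        + ((1 - J * W * Jᴴ) * J) * N * (Jᴴ * (1 - J * W * Jᴴ)) := by
          simp only [Matrix.mul_add, Matrix.add_mul, Matrix.mul_assoc]
    _ = _ := by rw [hl, hr, hlJ, hrJ]; simp only [Matrix.mul_assoc]

variable [PartialOrder R] [AddLeftMono R]

lemma posSemidef_add_conj_iff {D : Matrix m m R} {J : Matrix m n R} {N : Matrix n n R}
    (hD : D.IsHermitian) (hJ : Jᴴ * J = 1) (hDJ : Jᴴ * D = 0) :
    (D + J * N * Jᴴ).PosSemidef ↔ D.PosSemidef ∧ N.PosSemidef := by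
  refine ⟨fun h => ⟨?_, ?_⟩, fun ⟨hD, hN⟩ => hD.add (hN.mul_mul_conjTranspose_same J)⟩
  · have hP : (1 - J * Jᴴ)ᴴ = 1 - J * Jᴴ := by simp [conjTranspose_sub]
    have hcompress := one_sub_conj_mul_add_conj_mul_one_sub_conj 1 N hD hJ hDJ
    simp only [Matrix.mul_one, sub_self, Matrix.zero_mul, Matrix.mul_zero, add_zero] at hcompress
    have := h.conjTranspose_mul_mul_same (1 - J * Jᴴ)
    rwa [hP, hcompress] at this
  · have := h.conjTranspose_mul_mul_same J
    rwa [Matrix.mul_add, Matrix.add_mul, hDJ, Matrix.zero_mul, zero_add, ← Matrix.mul_assoc,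
      ← Matrix.mul_assoc, hJ, Matrix.one_mul, Matrix.mul_assoc, hJ, Matrix.mul_one] at this

end Compression

section RCLike

variable {n 𝕜 : Type*} [RCLike 𝕜]

lemma posSemidef_ofReal_smul_iff {r : ℝ} (hr : 0 < r) {A : Matrix n n 𝕜} :
    ((r : 𝕜) • A).PosSemidef ↔ A.PosSemidef := by
  refine ⟨fun h => ?_, fun h => h.smul (by exact_mod_cast hr.le)⟩
  have := h.smul (a := (r : 𝕜)⁻¹) (by simpa using hr.le)
  rwa [smul_smul, inv_mul_cancel₀ (by exact_mod_cast hr.ne'), one_smul] at this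

lemma posSemidef_map_ofReal_iff [Fintype n] {A : Matrix n n ℝ} :
    (A.map ((↑) : ℝ → 𝕜)).PosSemidef ↔ A.PosSemidef := by
  refine ⟨fun h => posSemidef_iff_dotProduct_mulVec.mpr ⟨?_, fun x => ?_⟩, fun h => ?_⟩
  · exact (isHermitian_map_iff (fun x => (RCLike.conj_ofReal x).symm)
      RCLike.ofReal_injective).mp h.1
  · have hx := h.dotProduct_mulVec_nonneg fun i => (x i : 𝕜)
    have hcast : star (fun i => (x i : 𝕜)) ⬝ᵥ A.map ((↑) : ℝ → 𝕜) *ᵥ (fun i => (x i : 𝕜)) =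
        ((star x ⬝ᵥ A *ᵥ x : ℝ) : 𝕜) := by
      simp [dotProduct, mulVec]
    rw [hcast] at hx
    exact RCLike.ofReal_nonneg.mp hx
  · obtain ⟨k, v, rfl⟩ := posSemidef_iff_eq_sum_vecMulVec.mp h
    refine posSemidef_iff_eq_sum_vecMulVec.mpr ⟨k, fun i j => (v i j : 𝕜), ?_⟩
    ext a b
    simp [Matrix.sum_apply, vecMulVec_apply]

end RCLike

section DiagEmbedding

variable (n R : Type*) [DecidableEq n] [Semiring R] [StarRing R]

def diagEmbedding : Matrix (n × n) n R := of fun p i => if p = (i, i) then 1 else 0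

variable {n R}

lemma conjTranspose_diagEmbedding : (diagEmbedding n R)ᴴ = (diagEmbedding n R)ᵀ := by
  ext i p
  simp [diagEmbedding, apply_ite star]

variable [Fintype n]

lemma conjTranspose_diagEmbedding_mul_self : (diagEmbedding n R)ᴴ * diagEmbedding n R = 1 := by
  ext i j
  rw [conjTranspose_diagEmbedding]
  simp [diagEmbedding, mul_apply, one_apply, eq_comm]

lemma diagEmbedding_mul_mul_conjTranspose_apply (X : Matrix n n R) (a b c e : n) :
    (diagEmbedding n R * X * (diagEmbedding n R)ᴴ) (a, b) (c, e) =
      if a = b ∧ c = e then X a c else 0 := by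
  rw [conjTranspose_diagEmbedding]
  obtain rfl | hab := eq_or_ne a b <;> obtain rfl | hce := eq_or_ne c e <;>
    simp_all [diagEmbedding, mul_apply, ite_and, eq_comm]

lemma conjTranspose_diagEmbedding_mul_diagonal {f : n × n → R} (hf : ∀ i, f (i, i) = 0) :
    (diagEmbedding n R)ᴴ * diagonal f = 0 := by
  ext i p
  rw [conjTranspose_diagEmbedding]
  simp only [transpose_apply, mul_diagonal, diagEmbedding, of_apply, ite_mul, one_mul, zero_mul,
    Matrix.zero_apply]
  split_ifs with hp
  · rw [hp, hf]
  · rfl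

lemma vecMulVec_diag_ofReal_eq_diagEmbedding_conj (v : n → ℝ) :
    vecMulVec (fun p : n × n => if p.1 = p.2 then (v p.1 : ℂ) else 0)
        (star fun p : n × n => if p.1 = p.2 then (v p.1 : ℂ) else 0) =
      diagEmbedding n ℂ * (vecMulVec v v).map ((↑) : ℝ → ℂ) * (diagEmbedding n ℂ)ᴴ := by
  ext ⟨a, b⟩ ⟨c, e⟩
  rw [diagEmbedding_mul_mul_conjTranspose_apply]
  by_cases hab : a = b <;> by_cases hce : c = e <;> simp [vecMulVec_apply, hab, hce]

end DiagEmbedding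

def offDiagEntries {n R : Type*} [DecidableEq n] [Zero R] (Q : Matrix n n R) : n × n → R :=
  fun p => if p.1 = p.2 then 0 else Q p.1 p.2

lemma offDiagEntries_nonneg_iff {n R : Type*} [DecidableEq n] [Zero R] [Preorder R]
    {Q : Matrix n n R} : 0 ≤ offDiagEntries Q ↔ ∀ i j, i ≠ j → 0 ≤ Q i j := by
  simp only [Pi.le_def, Prod.forall, offDiagEntries]
  refine forall₂_congr fun i j => ?_
  by_cases hij : i = j <;> simp [hij]

lemma gammaOp_generator_eq (d : ℕ) (c : ℂ) (Q P : Matrix (Fin d) (Fin d) ℝ) :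
    gammaOp d (c • (∑ i, ∑ j, single (i, i) (j, j) ((Q i j : ℝ) : ℂ))
      + c • (∑ i, ∑ j, if i = j then 0 else single (i, j) (i, j) ((P i j : ℝ) : ℂ))) =
    c • (diagonal (fun p => ((offDiagEntries Q p : ℝ) : ℂ)) +
      diagEmbedding (Fin d) ℂ *
        (of fun i j => if i = j then Q i i else P i j : Matrix (Fin d) (Fin d) ℝ).map
          ((↑) : ℝ → ℂ) *
        (diagEmbedding (Fin d) ℂ)ᴴ) := by
  have hP (i j : Fin d) : (if i = j then 0 else single (i, j) (i, j) ((P i j : ℝ) : ℂ)) =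
      single (i, j) (i, j) (if i = j then 0 else (P i j : ℂ)) := by
    split_ifs <;> simp
  ext ⟨a, b⟩ ⟨a', b'⟩
  rw [Matrix.smul_apply, Matrix.add_apply, diagEmbedding_mul_mul_conjTranspose_apply]
  simp only [hP]
  by_cases hab : a = b <;> by_cases ha' : a' = b' <;> by_cases haa : a = a' <;> subst_vars <;>
    simp [gammaOp, single_apply, Matrix.sum_apply, diagonal_apply, offDiagEntries, ite_and, *]

/-- for `L = 2π ∑_{i,j} Q_{ij}|i,i⟩⟨j,j| + 2π ∑_{i≠j} P_{ij}|i,j⟩⟨i,j|`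
with `Q, P` real and `ω = |ω⟩⟨ω|` the projector onto the maximally entangled vector,
the ccp condition `(I-ω)L^Γ(I-ω) ≥ 0` holds iff (a) `Q_{ij} ≥ 0` for `i ≠ j` and
(b) `(I - wwᵀ)M(I - wwᵀ) ≥ 0` with `M_{ii} = Q_{ii}`, `M_{i≠j} = P_{ij}`,
`w = (1,…,1)ᵀ/√d`. -/
theorem stmt10 (d : ℕ) (Q P : Matrix (Fin d) (Fin d) ℝ) :
    let L : Matrix (Fin d × Fin d) (Fin d × Fin d) ℂ :=
      (2 * (π : ℂ)) • (∑ i, ∑ j, Matrix.single (i, i) (j, j) ((Q i j : ℝ) : ℂ))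
      + (2 * (π : ℂ)) • (∑ i, ∑ j,
          if i = j then 0 else Matrix.single (i, j) (i, j) ((P i j : ℝ) : ℂ))
    let ωvec : Fin d × Fin d → ℂ := fun p => if p.1 = p.2 then 1 / Real.sqrt d else 0
    let ω : Matrix (Fin d × Fin d) (Fin d × Fin d) ℂ := vecMulVec ωvec (star ωvec)
    let w : Fin d → ℝ := fun _ => 1 / Real.sqrt d
    let M : Matrix (Fin d) (Fin d) ℝ :=
      Matrix.of fun i j => if i = j then Q i i else P i j
    ((1 - ω) * gammaOp d L * (1 - ω)).PosSemidef ↔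
      ((∀ i j, i ≠ j → 0 ≤ Q i j) ∧
        ((1 - vecMulVec w w) * M * (1 - vecMulVec w w)).PosSemidef) := by
  intro L ωvec ω w M
  set J := diagEmbedding (Fin d) ℂ
  set W := vecMulVec w w
  set D : Matrix (Fin d × Fin d) (Fin d × Fin d) ℂ :=
    diagonal fun p => ((offDiagEntries Q p : ℝ) : ℂ)
  have hω : ω = J * W.map ((↑) : ℝ → ℂ) * Jᴴ := by
    have hωvec : ωvec = fun p => if p.1 = p.2 then ((w p.1 : ℝ) : ℂ) else 0 := by
      simp only [ωvec, w, one_div, Complex.ofReal_inv]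
    rw [show ω = vecMulVec ωvec (star ωvec) from rfl, hωvec]
    exact vecMulVec_diag_ofReal_eq_diagEmbedding_conj w
  have hD : D.IsHermitian := isHermitian_diagonal_iff.mpr fun _ => Complex.conj_ofReal _
  have hDJ : Jᴴ * D = 0 := conjTranspose_diagEmbedding_mul_diagonal (by simp [offDiagEntries])
  have hN : (1 - W.map ((↑) : ℝ → ℂ)) * M.map (↑) * (1 - W.map (↑)) =
      ((1 - W) * M * (1 - W)).map ((↑) : ℝ → ℂ) := by
    change _ = Complex.ofRealHom.mapMatrix ((1 - W) * M * (1 - W))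
    rw [map_mul, map_mul, map_sub, map_one]
    rfl
  rw [show gammaOp d L = ((2 * π : ℝ) : ℂ) • (D + J * M.map ((↑) : ℝ → ℂ) * Jᴴ) by
      push_cast; exact gammaOp_generator_eq d _ Q P, hω, Matrix.mul_smul, Matrix.smul_mul,
    one_sub_conj_mul_add_conj_mul_one_sub_conj _ _ hD conjTranspose_diagEmbedding_mul_self hDJ, hN]
  exact (posSemidef_ofReal_smul_iff (r := 2 * π) (by positivity)).trans <|
    (posSemidef_add_conj_iff hD conjTranspose_diagEmbedding_mul_self hDJ).trans <|
    and_congr (posSemidef_diagonal_iff.trans <| by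
      simpa only [Pi.le_def, Pi.zero_apply, Complex.zero_le_real] using offDiagEntries_nonneg_iff)
      posSemidef_map_ofReal_iff
end

section
/- A Hermiticity-preserving linear map with matrix representation L (so that L^Γ is Hermitian) satisfying ⟨ω|L = 0 and (I-ω)L^Γ(I-ω) ≥ 0 generates a one-parameter semigroup e^{tL}, t ≥ 0, of completely positive trace-preserving maps. -/
/-!
Write `X = L^Γ` and `P = 1 - |ω⟩⟨ω|`. Since `X` is Hermitian,
`X - PXP = |ω⟩⟨w| + |w⟩⟨ω| - c|ω⟩⟨ω|` with `w = Xω` and `c = ⟨ω|X|ω⟩` real, and since `ω` is a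
multiple of the vectorised identity, `Γ` turns this into a Kronecker sum `A ⊗ 1 + 1 ⊗ Ā`.
Hence `L = (A ⊗ 1 + 1 ⊗ Ā) + Φ` with `Φ^Γ = PXP ≥ 0`. The first part exponentiates to
`e^{sA} ⊗ conj(e^{sA})`, whose Choi matrix has rank one, and `Φ` is completely positive.
Completely positive maps are closed under products, sums and limits, so the product formula
`e^{M + Φ} = lim (e^{M/n} (1 + Φ/n))^n` makes `e^{tL}` completely positive.
Trace preservation holds because `⟨ω|L^k = 0` for every `k ≥ 1`.
-/

open Matrix Real ComplexOrder

open Filter Topology Finset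
open scoped Kronecker Nat

section BanachAlgebra

variable {𝔸 : Type*} [NormedRing 𝔸] [NormOneClass 𝔸]

theorem norm_pow_sub_pow_le {X Y : 𝔸} {K : ℝ} (hX : ‖X‖ ≤ K) (hY : ‖Y‖ ≤ K) (n : ℕ) :
    ‖X ^ n - Y ^ n‖ ≤ n * K ^ (n - 1) * ‖X - Y‖ := by
  induction n with
  | zero => simp
  | succ n ih =>
    have hK : 0 ≤ K := (norm_nonneg X).trans hX
    have hsplit : X ^ (n + 1) - Y ^ (n + 1) = X ^ n * (X - Y) + (X ^ n - Y ^ n) * Y := by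
      simp only [pow_succ]; noncomm_ring
    calc ‖X ^ (n + 1) - Y ^ (n + 1)‖
        ≤ K ^ n * ‖X - Y‖ + n * K ^ (n - 1) * ‖X - Y‖ * K := by
          rw [hsplit]
          refine (norm_add_le _ _).trans (add_le_add ?_ ?_) <;> refine (norm_mul_le _ _).trans ?_
          · gcongr; exact (norm_pow_le X n).trans (pow_le_pow_left₀ (norm_nonneg X) hX n)
          · gcongr
      _ = (n + 1 : ℕ) * K ^ n * ‖X - Y‖ := by
          rcases n with _ | n
          · simp
          · push_cast; ring

variable [NormedAlgebra ℝ 𝔸] [CompleteSpace 𝔸]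

theorem norm_exp_sub_sum_range_le (x : 𝔸) (m : ℕ) :
    ‖NormedSpace.exp x - ∑ k ∈ range m, (k ! : ℝ)⁻¹ • x ^ k‖
      ≤ Real.exp ‖x‖ - ∑ k ∈ range m, (k ! : ℝ)⁻¹ * ‖x‖ ^ k := by
  have hx := (hasSum_nat_add_iff' m).mpr (NormedSpace.exp_series_hasSum_exp' (𝕂 := ℝ) x)
  have ha := (hasSum_nat_add_iff' m).mpr (NormedSpace.exp_series_hasSum_exp' (𝕂 := ℝ) ‖x‖)
  rw [← Real.exp_eq_exp_ℝ] at ha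
  refine hx.norm_le_of_bounded ha fun k => ?_
  rw [norm_smul, norm_inv, RCLike.norm_natCast, smul_eq_mul]
  gcongr
  exact norm_pow_le x _

theorem norm_exp_le_exp_norm (x : 𝔸) : ‖NormedSpace.exp x‖ ≤ Real.exp ‖x‖ := by
  simpa using norm_exp_sub_sum_range_le x 0

theorem norm_exp_sub_one_sub_id_le {x : 𝔸} (hx : ‖x‖ ≤ 1) :
    ‖NormedSpace.exp x - 1 - x‖ ≤ ‖x‖ ^ 2 := by
  have h := norm_exp_sub_sum_range_le x 2
  simp only [sum_range_succ, sum_range_zero, Nat.factorial, Nat.cast_one, inv_one, pow_zero,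
    pow_one, one_smul, one_mul, zero_add, Nat.succ_eq_add_one] at h
  rw [← sub_sub, ← sub_sub] at h
  exact h.trans (abs_le.mp (Real.abs_exp_sub_one_sub_id_le (by rwa [abs_norm]))).2

theorem norm_exp_mul_one_add_le (x y : 𝔸) :
    ‖NormedSpace.exp x * (1 + y)‖ ≤ Real.exp (‖x‖ + ‖y‖) := by
  rw [Real.exp_add]
  refine (norm_mul_le _ _).trans (mul_le_mul (norm_exp_le_exp_norm x) ?_ (norm_nonneg _)
    (Real.exp_pos _).le)
  calc ‖1 + y‖ ≤ 1 + ‖y‖ := (norm_add_le _ _).trans_eq (by rw [norm_one])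
    _ ≤ Real.exp ‖y‖ := by linarith [Real.add_one_le_exp ‖y‖]

theorem norm_exp_mul_one_add_sub_exp_add_le {x y : 𝔸} (h : ‖x‖ + ‖y‖ ≤ 1) :
    ‖NormedSpace.exp x * (1 + y) - NormedSpace.exp (x + y)‖ ≤ 3 * (‖x‖ + ‖y‖) ^ 2 := by
  have hxy : ‖x + y‖ ≤ ‖x‖ + ‖y‖ := norm_add_le x y
  have hx := norm_nonneg x
  have hy := norm_nonneg y
  have e1 := norm_exp_sub_one_sub_id_le (x := x) (by linarith)
  have e2 := norm_exp_sub_one_sub_id_le (x := x + y) (hxy.trans h)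
  have hsplit : NormedSpace.exp x * (1 + y) - NormedSpace.exp (x + y)
      = (NormedSpace.exp x - 1 - x) * (1 + y) + x * y
        - (NormedSpace.exp (x + y) - 1 - (x + y)) := by
    noncomm_ring
  calc _ ≤ ‖NormedSpace.exp x - 1 - x‖ * (1 + ‖y‖) + ‖x‖ * ‖y‖
        + ‖NormedSpace.exp (x + y) - 1 - (x + y)‖ := by
        rw [hsplit]
        refine (norm_sub_le _ _).trans (add_le_add_left ((norm_add_le _ _).trans ?_) _)
        refine add_le_add ((norm_mul_le _ _).trans ?_) (norm_mul_le _ _)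
        gcongr
        exact (norm_add_le _ _).trans_eq (by rw [norm_one])
    _ ≤ ‖x‖ ^ 2 * (1 + ‖y‖) + ‖x‖ * ‖y‖ + ‖x + y‖ ^ 2 := by gcongr
    _ ≤ 3 * (‖x‖ + ‖y‖) ^ 2 := by nlinarith [norm_nonneg (x + y)]

theorem tendsto_exp_smul_mul_one_add_smul_pow (M Φ : 𝔸) :
    Tendsto (fun n : ℕ => (NormedSpace.exp ((n : ℝ)⁻¹ • M) * (1 + (n : ℝ)⁻¹ • Φ)) ^ n) atTop
      (𝓝 (NormedSpace.exp (M + Φ))) := by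
  let _ : NormedAlgebra ℚ 𝔸 := NormedAlgebra.restrictScalars ℚ ℝ 𝔸
  set a := ‖M‖ + ‖Φ‖
  rw [← tendsto_sub_nhds_zero_iff]
  refine squeeze_zero_norm' ?_ (tendsto_const_div_atTop_nhds_zero_nat (3 * a ^ 2 * Real.exp a))
  obtain ⟨N, hN⟩ := exists_nat_ge a
  filter_upwards [eventually_ge_atTop (max N 1)] with n hn
  replace hn : max (N : ℝ) 1 ≤ n := by exact_mod_cast hn
  have hn1 : (1 : ℝ) ≤ n := (le_max_right _ _).trans hn
  have han : a / n ≤ 1 := div_le_one_of_le₀ (hN.trans ((le_max_left _ _).trans hn)) (by positivity)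
  have hnorm : ∀ z : 𝔸, ‖(n : ℝ)⁻¹ • z‖ = ‖z‖ / n := fun z => by
    rw [norm_smul, norm_inv, RCLike.norm_natCast, inv_mul_eq_div]
  have hstep : ‖(n : ℝ)⁻¹ • M‖ + ‖(n : ℝ)⁻¹ • Φ‖ = a / n := by rw [hnorm, hnorm, add_div]
  have hpow : NormedSpace.exp ((n : ℝ)⁻¹ • M + (n : ℝ)⁻¹ • Φ) ^ n = NormedSpace.exp (M + Φ) := by
    rw [← NormedSpace.exp_nsmul, ← smul_add, ← Nat.cast_smul_eq_nsmul ℝ, smul_smul,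
      mul_inv_cancel₀ (by linarith), one_smul]
  -- One step is `O(1/n²)` away from `exp ((M + Φ) / n)`; telescoping the `n`-th powers costs `n`.
  have hX := norm_exp_mul_one_add_le ((n : ℝ)⁻¹ • M) ((n : ℝ)⁻¹ • Φ)
  have hY := (norm_exp_le_exp_norm ((n : ℝ)⁻¹ • M + (n : ℝ)⁻¹ • Φ)).trans
    (Real.exp_le_exp.2 ((norm_add_le _ _).trans hstep.le))
  have hXY := norm_exp_mul_one_add_sub_exp_add_le (hstep.trans_le han)
  rw [hstep] at hX hXY
  have hKn : Real.exp (a / n) ^ (n - 1) ≤ Real.exp a := by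
    calc Real.exp (a / n) ^ (n - 1) ≤ Real.exp (a / n) ^ n :=
          pow_le_pow_right₀ (Real.one_le_exp (by positivity)) (Nat.sub_le n 1)
      _ = Real.exp a := by rw [← Real.exp_nat_mul, mul_div_cancel₀ _ (by linarith)]
  calc _ = ‖(NormedSpace.exp ((n : ℝ)⁻¹ • M) * (1 + (n : ℝ)⁻¹ • Φ)) ^ n
          - NormedSpace.exp ((n : ℝ)⁻¹ • M + (n : ℝ)⁻¹ • Φ) ^ n‖ := by rw [hpow]
    _ ≤ n * Real.exp (a / n) ^ (n - 1) * (3 * (a / n) ^ 2) :=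
        (norm_pow_sub_pow_le hX hY n).trans (by gcongr)
    _ ≤ n * Real.exp a * (3 * (a / n) ^ 2) := by gcongr
    _ = 3 * a ^ 2 * Real.exp a / n := by field_simp

end BanachAlgebra

section KroneckerSum

variable {ι κ : Type*} [DecidableEq ι] [DecidableEq κ]

def kroneckerSum (A : Matrix ι ι ℂ) (B : Matrix κ κ ℂ) : Matrix (ι × κ) (ι × κ) ℂ :=
  A ⊗ₖ 1 + 1 ⊗ₖ B

theorem smul_kroneckerSum (s : ℝ) (A : Matrix ι ι ℂ) (B : Matrix κ κ ℂ) :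
    s • kroneckerSum A B = kroneckerSum (s • A) (s • B) := by
  simp only [kroneckerSum, smul_add, smul_kronecker, kronecker_smul]

variable [Fintype ι] [Fintype κ]

theorem exp_kronecker_one (A : Matrix ι ι ℂ) :
    NormedSpace.exp (A ⊗ₖ (1 : Matrix κ κ ℂ)) = NormedSpace.exp A ⊗ₖ 1 := by
  let f : Matrix ι ι ℂ →+* Matrix (ι × κ) (ι × κ) ℂ :=
    { toFun := (· ⊗ₖ 1)
      map_one' := one_kronecker_one
      map_mul' := fun X Y => by rw [← mul_kronecker_mul, one_mul]
      map_zero' := zero_kronecker 1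
      map_add' := fun X Y => add_kronecker X Y 1 }
  open scoped Matrix.Norms.Operator in
  exact (NormedSpace.map_exp f
    (continuous_matrix fun _ _ => (continuous_id.matrix_elem _ _).mul continuous_const) A).symm

theorem exp_one_kronecker (B : Matrix κ κ ℂ) :
    NormedSpace.exp ((1 : Matrix ι ι ℂ) ⊗ₖ B) = 1 ⊗ₖ NormedSpace.exp B := by
  let f : Matrix κ κ ℂ →+* Matrix (ι × κ) (ι × κ) ℂ :=
    { toFun := ((1 : Matrix ι ι ℂ) ⊗ₖ ·)
      map_one' := one_kronecker_one
      map_mul' := fun X Y => by rw [← mul_kronecker_mul, one_mul]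
      map_zero' := kronecker_zero 1
      map_add' := fun X Y => kronecker_add 1 X Y }
  open scoped Matrix.Norms.Operator in
  exact (NormedSpace.map_exp f
    (continuous_matrix fun _ _ => continuous_const.mul (continuous_id.matrix_elem _ _)) B).symm

theorem exp_kroneckerSum (A : Matrix ι ι ℂ) (B : Matrix κ κ ℂ) :
    NormedSpace.exp (kroneckerSum A B) = NormedSpace.exp A ⊗ₖ NormedSpace.exp B := by
  have hcomm : Commute (A ⊗ₖ (1 : Matrix κ κ ℂ)) ((1 : Matrix ι ι ℂ) ⊗ₖ B) := by
    simp only [Commute, SemiconjBy, ← mul_kronecker_mul, one_mul, mul_one]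
  rw [kroneckerSum, Matrix.exp_add_of_commute _ _ hcomm, exp_kronecker_one, exp_one_kronecker,
    ← mul_kronecker_mul, one_mul, mul_one]

theorem exp_map_conj (A : Matrix ι ι ℂ) :
    NormedSpace.exp (A.map (starRingEnd ℂ)) = (NormedSpace.exp A).map (starRingEnd ℂ) := by
  have h (B : Matrix ι ι ℂ) : B.map (starRingEnd ℂ) = Bᴴᵀ := by ext; simp
  rw [h, h, Matrix.exp_transpose, Matrix.exp_conjTranspose]

end KroneckerSum

section MatrixFacts

variable {ι : Type*} [Fintype ι]

theorem isClosed_setOf_posSemidef : IsClosed {A : Matrix ι ι ℂ | A.PosSemidef} := by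
  simp only [posSemidef_iff_dotProduct_mulVec, Set.ofPred_and, Set.ofPred_forall]
  refine (isClosed_eq (by fun_prop) continuous_id).inter (isClosed_iInter fun x => ?_)
  exact isClosed_le continuous_const (by fun_prop)

variable [DecidableEq ι]

theorem vecMul_exp_eq_self {v : ι → ℂ} {A : Matrix ι ι ℂ} (h : v ᵥ* A = 0) :
    v ᵥ* NormedSpace.exp A = v := by
  let rowMul : Matrix ι ι ℂ →ₗ[ℂ] ι → ℂ :=
    { toFun := (v ᵥ* ·)
      map_add' := fun _ _ => vecMul_add _ _ _
      map_smul' := fun _ _ => vecMul_smul _ _ _ }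
  have hs := open scoped Matrix.Norms.Operator in
    (NormedSpace.exp_series_hasSum_exp' (𝕂 := ℂ) A).mapL (LinearMap.toContinuousLinearMap rowMul)
  have hterm : ∀ n ≠ 0, rowMul ((n ! : ℂ)⁻¹ • A ^ n) = 0 := fun n hn => by
    obtain ⟨n, rfl⟩ := Nat.exists_eq_succ_of_ne_zero hn
    simp [rowMul, pow_succ', ← vecMul_vecMul, h]
  calc v ᵥ* NormedSpace.exp A = rowMul ((0 ! : ℂ)⁻¹ • A ^ 0) := hs.unique (hasSum_single 0 hterm)
    _ = v := by simp [rowMul]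

theorem sub_compress_eq_of_isHermitian {X : Matrix ι ι ℂ} (hX : X.IsHermitian) (ω : ι → ℂ) :
    X - (1 - vecMulVec ω (star ω)) * X * (1 - vecMulVec ω (star ω))
      = vecMulVec ω (star (X *ᵥ ω)) + vecMulVec (X *ᵥ ω) (star ω)
        - (star ω ⬝ᵥ X *ᵥ ω) • vecMulVec ω (star ω) := by
  have hrow : star ω ᵥ* X = star (X *ᵥ ω) := by rw [star_mulVec, hX.eq]
  have hexpand : X - (1 - vecMulVec ω (star ω)) * X * (1 - vecMulVec ω (star ω))
      = vecMulVec ω (star ω) * X + X * vecMulVec ω (star ω)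
        - vecMulVec ω (star ω) * X * vecMulVec ω (star ω) := by noncomm_ring
  rw [hexpand, vecMulVec_mul, mul_vecMulVec, vecMulVec_mul_vecMulVec, hrow, ← hrow,
    ← dotProduct_mulVec, vecMulVec_smul]

end MatrixFacts

section Choi

variable {d : ℕ}

theorem gammaOp_gammaOp (M : Matrix (Fin d × Fin d) (Fin d × Fin d) ℂ) :
    gammaOp d (gammaOp d M) = M := rfl

theorem gammaOp_sum {κ : Type*} (s : Finset κ) (M : κ → Matrix (Fin d × Fin d) (Fin d × Fin d) ℂ) :
    gammaOp d (∑ k ∈ s, M k) = ∑ k ∈ s, gammaOp d (M k) := by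
  ext; simp [gammaOp, Matrix.sum_apply]

theorem continuous_gammaOp : Continuous (gammaOp d) :=
  continuous_matrix fun _ _ => continuous_id.matrix_elem _ _

theorem gammaOp_kronecker_map_conj (K K' : Matrix (Fin d) (Fin d) ℂ) :
    gammaOp d (K ⊗ₖ K'.map (starRingEnd ℂ))
      = vecMulVec (Function.uncurry K) (star (Function.uncurry K')) :=
  rfl

theorem gammaOp_vecMulVec (u v : Fin d × Fin d → ℂ) :
    gammaOp d (vecMulVec u (star v))
      = Matrix.of (Function.curry u) ⊗ₖ (Matrix.of (Function.curry v)).map (starRingEnd ℂ) :=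
  rfl

def IsCompletelyPositive (E : Matrix (Fin d × Fin d) (Fin d × Fin d) ℂ) : Prop :=
  (gammaOp d E).PosSemidef

theorem isClosed_setOf_isCompletelyPositive :
    IsClosed {E : Matrix (Fin d × Fin d) (Fin d × Fin d) ℂ | IsCompletelyPositive E} :=
  isClosed_setOf_posSemidef.preimage continuous_gammaOp

namespace IsCompletelyPositive

theorem kronecker_map_conj (K : Matrix (Fin d) (Fin d) ℂ) :
    IsCompletelyPositive (K ⊗ₖ K.map (starRingEnd ℂ)) := by
  rw [IsCompletelyPositive, gammaOp_kronecker_map_conj]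
  exact posSemidef_vecMulVec_self_star _

theorem one : IsCompletelyPositive (1 : Matrix (Fin d × Fin d) (Fin d × Fin d) ℂ) := by
  simpa using kronecker_map_conj (1 : Matrix (Fin d) (Fin d) ℂ)

theorem add {E F : Matrix (Fin d × Fin d) (Fin d × Fin d) ℂ} (hE : IsCompletelyPositive E)
    (hF : IsCompletelyPositive F) : IsCompletelyPositive (E + F) :=
  PosSemidef.add hE hF

theorem smul {E : Matrix (Fin d × Fin d) (Fin d × Fin d) ℂ} (hE : IsCompletelyPositive E)
    {s : ℝ} (hs : 0 ≤ s) : IsCompletelyPositive (s • E) :=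
  PosSemidef.smul hE hs

theorem sum {κ : Type*} {s : Finset κ} {E : κ → Matrix (Fin d × Fin d) (Fin d × Fin d) ℂ}
    (hE : ∀ k ∈ s, IsCompletelyPositive (E k)) : IsCompletelyPositive (∑ k ∈ s, E k) := by
  rw [IsCompletelyPositive, gammaOp_sum]
  exact posSemidef_sum s hE

theorem exists_kraus {E : Matrix (Fin d × Fin d) (Fin d × Fin d) ℂ} (hE : IsCompletelyPositive E) :
    ∃ (m : ℕ) (K : Fin m → Matrix (Fin d) (Fin d) ℂ),
      E = ∑ i, K i ⊗ₖ (K i).map (starRingEnd ℂ) := by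
  obtain ⟨m, v, hv⟩ := posSemidef_iff_eq_sum_vecMulVec.mp hE
  refine ⟨m, fun i => Matrix.of (Function.curry (v i)), ?_⟩
  rw [← gammaOp_gammaOp E, hv, gammaOp_sum]
  simp only [gammaOp_vecMulVec]

theorem mul {E F : Matrix (Fin d × Fin d) (Fin d × Fin d) ℂ} (hE : IsCompletelyPositive E)
    (hF : IsCompletelyPositive F) : IsCompletelyPositive (E * F) := by
  obtain ⟨m, K, rfl⟩ := hE.exists_kraus
  obtain ⟨m', K', rfl⟩ := hF.exists_kraus
  simp only [Finset.sum_mul_sum, ← mul_kronecker_mul, ← Matrix.map_mul]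
  exact sum fun i _ => sum fun j _ => kronecker_map_conj _

theorem pow {E : Matrix (Fin d × Fin d) (Fin d × Fin d) ℂ} (hE : IsCompletelyPositive E) (n : ℕ) :
    IsCompletelyPositive (E ^ n) := by
  induction n with
  | zero => exact pow_zero E ▸ one
  | succ n ih => exact pow_succ E n ▸ ih.mul hE

theorem exp_smul_kroneckerSum_conj (A : Matrix (Fin d) (Fin d) ℂ) (s : ℝ) :
    IsCompletelyPositive (NormedSpace.exp (s • kroneckerSum A (A.map (starRingEnd ℂ)))) := by
  have hconj : s • A.map (starRingEnd ℂ) = (s • A).map (starRingEnd ℂ) := by ext; simp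
  rw [smul_kroneckerSum, hconj, exp_kroneckerSum, exp_map_conj]
  exact kronecker_map_conj _

theorem exp_add {M Φ : Matrix (Fin d × Fin d) (Fin d × Fin d) ℂ}
    (hM : ∀ s : ℝ, 0 ≤ s → IsCompletelyPositive (NormedSpace.exp (s • M)))
    (hΦ : IsCompletelyPositive Φ) : IsCompletelyPositive (NormedSpace.exp (M + Φ)) := by
  rcases isEmpty_or_nonempty (Fin d) with hd | hd
  · rw [IsCompletelyPositive, Subsingleton.elim (gammaOp d _) 0]
    exact PosSemidef.zero
  open scoped Matrix.Norms.Operator in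
  refine isClosed_setOf_isCompletelyPositive.mem_of_tendsto
    (tendsto_exp_smul_mul_one_add_smul_pow M Φ) (Eventually.of_forall fun n => ?_)
  exact ((hM _ (by positivity)).mul (one.add (hΦ.smul (by positivity)))).pow n

end IsCompletelyPositive

theorem exists_gammaOp_sub_compress_eq_kroneckerSum
    {X : Matrix (Fin d × Fin d) (Fin d × Fin d) ℂ} (hX : X.IsHermitian) {r : ℝ}
    {ω : Fin d × Fin d → ℂ} (hω : ω = fun p => if p.1 = p.2 then (r : ℂ) else 0) :
    ∃ A : Matrix (Fin d) (Fin d) ℂ,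
      gammaOp d (X - (1 - vecMulVec ω (star ω)) * X * (1 - vecMulVec ω (star ω)))
        = kroneckerSum A (A.map (starRingEnd ℂ)) := by
  obtain ⟨c, hc⟩ : ∃ c : ℝ, star ω ⬝ᵥ X *ᵥ ω = c :=
    ⟨_, Complex.ext rfl (by simpa using hX.im_star_dotProduct_mulVec_self ω)⟩
  refine ⟨(r : ℂ) • Matrix.of (Function.curry (X *ᵥ ω)) - ((c * r ^ 2 / 2 : ℝ) : ℂ) • 1, ?_⟩
  rw [sub_compress_eq_of_isHermitian hX, hc]
  generalize X *ᵥ ω = w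
  subst hω
  ext ⟨i, j⟩ ⟨k, l⟩
  by_cases hik : i = k <;> by_cases hjl : j = l <;>
    simp [gammaOp, kroneckerSum, vecMulVec_apply, one_apply, hik, hjl, map_ofNat] <;> ring

end Choi

/-- if `L` (the matrix representation of a Hermiticity-preserving
superoperator, i.e. `L^Γ` Hermitian) satisfies the normalisation `⟨ω|L = 0` and
conditional complete positivity `(I-ω)L^Γ(I-ω) ≥ 0`, then for every `t ≥ 0` the
map represented by `e^{tL}` is completely positive (Choi matrix `(e^{tL})^Γ ≥ 0`)
and trace preserving (`⟨ω|e^{tL} = ⟨ω|`): `L` generates a one-parameter semigroup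
of CPT maps. -/
theorem stmt11 (d : ℕ) (L : Matrix (Fin d × Fin d) (Fin d × Fin d) ℂ)
    (ωvec : Fin d × Fin d → ℂ)
    (hω : ωvec = fun p : Fin d × Fin d => if p.1 = p.2 then ((1 / Real.sqrt d : ℝ) : ℂ) else 0)
    (hHerm : (gammaOp d L).IsHermitian)
    (hnorm : Matrix.vecMul (star ωvec) L = 0)
    (hccp : ((1 - vecMulVec ωvec (star ωvec)) * gammaOp d L *
        (1 - vecMulVec ωvec (star ωvec))).PosSemidef) :
    ∀ t : ℝ, 0 ≤ t →
      (gammaOp d (NormedSpace.exp ((t : ℂ) • L))).PosSemidef ∧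
      Matrix.vecMul (star ωvec) (NormedSpace.exp ((t : ℂ) • L)) = star ωvec := by
  intro t ht
  refine ⟨?_, vecMul_exp_eq_self (by rw [vecMul_smul, hnorm, smul_zero])⟩
  obtain ⟨A, hA⟩ := exists_gammaOp_sub_compress_eq_kroneckerSum hHerm hω
  set Φ := gammaOp d ((1 - vecMulVec ωvec (star ωvec)) * gammaOp d L *
    (1 - vecMulVec ωvec (star ωvec)))
  -- `Γ ∘ Γ = id` holds definitionally, so `hccp` and `hA` are statements about `Φ` and `L - Φ`.
  have hΦ : IsCompletelyPositive Φ := hccp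
  have hLΦ : L - Φ = kroneckerSum A (A.map (starRingEnd ℂ)) := hA
  have hsplit : (t : ℂ) • L = t • (L - Φ) + t • Φ := by
    rw [Complex.coe_smul, ← smul_add, sub_add_cancel]
  rw [hsplit]
  refine IsCompletelyPositive.exp_add (fun s _ => ?_) (hΦ.smul ht)
  rw [hLΦ, smul_smul]
  exact IsCompletelyPositive.exp_smul_kroneckerSum_conj A (s * t)
end

section
/- Any finite set of linearly independent vectors v₁,…,v_V in ℝ^n can be extended (by appending additional coordinates, i.e., embedding into ℝ^{n'} for some n' ≥ n with the original coordinates preserved) to a set of mutually orthogonal vectors all having the same Euclidean norm. -/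
/-!
Let `G` be the Gram matrix of the `v c` and `L` the sum of the absolute values of its entries.
Then `L • 1 - G` is positive semidefinite, hence the Gram matrix of some vectors `w c`, and the
vectors `v c` followed by `w c` have Gram matrix `G + (L • 1 - G) = L • 1`.
-/

open Matrix

theorem Fin.append_dotProduct_append {R : Type*} [Semiring R] {m k : ℕ} (a c : Fin m → R)
    (b d : Fin k → R) : Fin.append a b ⬝ᵥ Fin.append c d = a ⬝ᵥ c + b ⬝ᵥ d := by
  simp [dotProduct, Fin.sum_univ_add]

section

variable {ι : Type*} [Fintype ι]

theorem sq_le_dotProduct_self (x : ι → ℝ) (i : ι) : x i ^ 2 ≤ x ⬝ᵥ x := by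
  simpa [dotProduct, sq] using
    Finset.single_le_sum (fun j _ => mul_self_nonneg (x j)) (Finset.mem_univ i)

theorem abs_mul_le_dotProduct_self (x : ι → ℝ) (i j : ι) : |x i * x j| ≤ x ⬝ᵥ x := by
  have hi := sq_le_dotProduct_self x i
  have hj := sq_le_dotProduct_self x j
  rw [abs_mul]
  nlinarith [two_mul_le_add_sq |x i| |x j|, sq_abs (x i), sq_abs (x j)]

theorem dotProduct_mulVec_le_sum_abs_mul (G : Matrix ι ι ℝ) (x : ι → ℝ) :
    x ⬝ᵥ (G *ᵥ x) ≤ (∑ i, ∑ j, |G i j|) * (x ⬝ᵥ x) := by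
  calc x ⬝ᵥ (G *ᵥ x) = ∑ i, ∑ j, G i j * (x i * x j) := by
        simp only [dotProduct, mulVec, Finset.mul_sum]; congr! 2; ring
    _ ≤ ∑ i, ∑ j, |G i j| * (x ⬝ᵥ x) := by
        refine Finset.sum_le_sum fun i _ => Finset.sum_le_sum fun j _ => ?_
        calc G i j * (x i * x j) ≤ |G i j| * |x i * x j| := (le_abs_self _).trans_eq (abs_mul _ _)
          _ ≤ |G i j| * (x ⬝ᵥ x) := by gcongr; exact abs_mul_le_dotProduct_self x i j
    _ = (∑ i, ∑ j, |G i j|) * (x ⬝ᵥ x) := by simp only [Finset.sum_mul]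

theorem posSemidef_sum_abs_smul_one_sub [DecidableEq ι] {G : Matrix ι ι ℝ} (hG : G.IsHermitian) :
    ((∑ i, ∑ j, |G i j|) • 1 - G).PosSemidef := by
  refine .of_dotProduct_mulVec_nonneg ((isHermitian_one.smul (.all _)).sub hG) fun x => ?_
  simpa [sub_mulVec, dotProduct_sub, smul_mulVec] using dotProduct_mulVec_le_sum_abs_mul G x

theorem Matrix.PosSemidef.exists_gram_eq {A : Matrix ι ι ℝ} (hA : A.PosSemidef) :
    ∃ w : ι → ι → ℝ, ∀ i j, w i ⬝ᵥ w j = A i j := by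
  classical
  open scoped MatrixOrder in
  obtain ⟨B, rfl⟩ := CStarAlgebra.nonneg_iff_eq_star_mul_self.mp hA.nonneg
  exact ⟨Bᵀ, fun i j => by simp [mul_apply, dotProduct]⟩

theorem exists_dotProduct_add_dotProduct_eq_ite [DecidableEq ι] {κ : Type*} [Fintype κ]
    (v : ι → κ → ℝ) :
    ∃ (L : ℝ) (w : ι → ι → ℝ), ∀ i j, v i ⬝ᵥ v j + w i ⬝ᵥ w j = if i = j then L else 0 := by
  set G : Matrix ι ι ℝ := of fun i j => v i ⬝ᵥ v j
  have hG : G.IsHermitian := IsHermitian.ext fun i j => dotProduct_comm (v j) (v i)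
  obtain ⟨w, hw⟩ := (posSemidef_sum_abs_smul_one_sub hG).exists_gram_eq
  refine ⟨∑ i, ∑ j, |G i j|, w, fun i j => ?_⟩
  rw [hw]
  by_cases h : i = j <;> simp [G, h, one_apply]

end

theorem stmt14_general (V n : ℕ) (v : Fin V → Fin n → ℝ) :
    ∃ (n' : ℕ) (hn : n ≤ n') (v' : Fin V → Fin n' → ℝ),
      (∀ (c : Fin V) (i : Fin n), v' c (Fin.castLE hn i) = v c i) ∧
      (∀ c c', c ≠ c' → v' c ⬝ᵥ v' c' = 0) ∧
      (∀ c c', v' c ⬝ᵥ v' c = v' c' ⬝ᵥ v' c') := by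
  obtain ⟨L, w, hw⟩ := exists_dotProduct_add_dotProduct_eq_ite v
  refine ⟨n + V, Nat.le_add_right n V, fun c => Fin.append (v c) (w c),
    fun c i => Fin.append_left (v c) (w c) i, fun c c' hne => ?_, fun c c' => ?_⟩
  · simp only [Fin.append_dotProduct_append, hw, if_neg hne]
  · simp only [Fin.append_dotProduct_append, hw]

/-- any linearly independent family `v₁,…,v_V ∈ ℝ^n` can be
extended, by appending additional coordinates (embedding into `ℝ^{n'}`, `n' ≥ n`,
with the original coordinates preserved), to a family of mutually orthogonal
vectors all having the same Euclidean norm. -/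
theorem stmt14 (V n : ℕ) (v : Fin V → Fin n → ℝ)
    (hli : LinearIndependent ℝ v) :
    ∃ (n' : ℕ) (hn : n ≤ n') (v' : Fin V → Fin n' → ℝ),
      (∀ (c : Fin V) (i : Fin n), v' c (Fin.castLE hn i) = v c i) ∧
      (∀ c c', c ≠ c' → v' c ⬝ᵥ v' c' = 0) ∧
      (∀ c c', v' c ⬝ᵥ v' c = v' c' ⬝ᵥ v' c') :=
  stmt14_general V n v
end
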